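/- Let T > 0, n ∈ ℕ, p ∈ [1,∞), σ > 0, and let D ⊆ L^p((0,T);ℝⁿ) satisfy: (D1) every u ∈ D has a representative v with v(t) ∈ {0,1}ⁿ for all t ∈ (0,T) and Σ_{j=1}^n Var(v_j;(0,T)) ≤ σ (pointwise total variation), and (D2) D is closed in L^p((0,T);ℝⁿ). Let M ∈ ℕ, let I₁,…,I_M be nonempty bounded open subintervals of (0,T), let j₁,…,j_M ∈ {1,…,n}, and define the linear map Π : L^p((0,T);ℝⁿ) → ℝ^M by Π(u)_i = (1/λ(I_i)) ∫_{I_i} u_{j_i} dλ, where λ is Lebesgue measure. Then the set C_{D,Π} := conv{Π(u) : u ∈ D} is closed in ℝ^M. -/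

import Mathlib

/-
Each component of an element of `D` is `{0,1}`-valued with variation at most `σ`, so it fails
to be locally constant at no more than `⌊σ⌋` points; between consecutive such points (and `0`,
`T`) it is constant. Hence it agrees a.e. with the indicator of a union of boundedly many
intervals with endpoints in `[0,T]`. For `p < ∞` the map from these endpoints to `Lᵖ` is
continuous (a.e. convergence plus a uniform bound), so the closed set `D` sits inside the image
of a compact parameter set and is compact. The averaging map is continuous, so `Π '' D` is
compact, and by Carathéodory's theorem the convex hull of a compact subset of `ℝ^M` is compact,
hence closed.
-/

open MeasureTheory Set Filter
open scoped ENNReal Topology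

theorem Set.Finite.exists_fin_range_eq {α : Type*} {s : Set α} (hs : s.Finite) (hne : s.Nonempty)
    {m : ℕ} (hm : s.ncard ≤ m) : ∃ e : Fin m → α, range e = s := by
  have := hs.fintype
  obtain ⟨g, hg⟩ : ∃ g : Fin m → s, g.Surjective := Function.exists_surjective_iff.2
    ⟨⟨fun _ => ⟨hne.some, hne.some_mem⟩⟩, Function.Embedding.nonempty_of_card_le
      (by rwa [Fintype.card_fin, ← Nat.card_eq_fintype_card, Nat.card_coe_set_eq])⟩
  exact ⟨Subtype.val ∘ g, by rw [range_comp, hg.range_eq, image_univ, Subtype.range_coe]⟩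

theorem exists_Ioo_mem_disjoint_range {ι α : Type*} [Finite ι] [LinearOrder α] {e : ι → α}
    {t : α}    (hlo : ∃ a, e a < t) (hhi : ∃ b, t < e b) (ht : t ∉ range e) :
    ∃ a b, t ∈ Ioo (e a) (e b) ∧ Disjoint (Ioo (e a) (e b)) (range e) := by
  obtain ⟨a, ha, hamax⟩ := Set.exists_max_image {a | e a < t} e (Set.toFinite _) hlo
  obtain ⟨b, hb, hbmin⟩ := Set.exists_min_image {b | t < e b} e (Set.toFinite _) hhi
  refine ⟨a, b, ⟨ha, hb⟩, Set.disjoint_left.2 ?_⟩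
  rintro _ ⟨hal, hlb⟩ ⟨l, rfl⟩
  rcases lt_trichotomy (e l) t with hlt | heq | hgt
  · exact (hamax l hlt).not_gt hal
  · exact ht ⟨l, heq⟩
  · exact (hbmin l hgt).not_gt hlb

section ConvexHull

variable {E : Type*} [AddCommGroup E] [Module ℝ E] [FiniteDimensional ℝ E]

theorem convexHull_eq_biUnion_image_stdSimplex (s : Set E) :
    convexHull ℝ s = ⋃ k ∈ Finset.range (Module.finrank ℝ E + 2),
      (fun wz : (Fin k → ℝ) × (Fin k → E) => ∑ i, wz.1 i • wz.2 i) ''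
        (stdSimplex ℝ (Fin k) ×ˢ univ.pi fun _ => s) := by
  refine Subset.antisymm (fun x hx => ?_) (iUnion₂_subset fun k _ => ?_)
  · obtain ⟨ι, _, z, w, hzs, hai, hw0, hw1, rfl⟩ := eq_pos_convex_span_of_mem_convexHull hx
    have hcard : Fintype.card ι < Module.finrank ℝ E + 2 :=
      Nat.lt_succ_of_le (hai.card_le_finrank_succ.trans
        (Nat.add_le_add_right (Submodule.finrank_le _) 1))
    let e := Fintype.equivFin ι
    refine mem_iUnion₂.2 ⟨_, Finset.mem_range.2 hcard, (w ∘ e.symm, z ∘ e.symm),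
      ⟨⟨fun i => (hw0 _).le, ?_⟩, fun i _ => hzs (mem_range_self _)⟩, ?_⟩
    · simpa only [Function.comp_apply, e.symm.sum_comp w] using hw1
    · simp only [Function.comp_apply]
      exact e.symm.sum_comp fun i => w i • z i
  · rintro _ ⟨⟨w, z⟩, ⟨hw, hz⟩, rfl⟩
    exact (convex_convexHull ℝ s).sum_mem (fun i _ => hw.1 i) hw.2
      fun i _ => subset_convexHull ℝ s (hz i (mem_univ i))

variable [TopologicalSpace E] [ContinuousAdd E] [ContinuousSMul ℝ E]

theorem IsCompact.convexHull {s : Set E} (hs : IsCompact s) : IsCompact (convexHull ℝ s) := by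
  rw [convexHull_eq_biUnion_image_stdSimplex]
  exact (Finset.range _).isCompact_biUnion fun k _ =>
    ((isCompact_stdSimplex _ _).prod (isCompact_univ_pi fun _ => hs)).image <|
      continuous_finsetSum _ fun i _ =>
        ((continuous_apply i).comp continuous_fst).smul ((continuous_apply i).comp continuous_snd)

end ConvexHull

theorem MeasureTheory.Lp.continuous_setIntegral_comp_clm {α E F : Type*} [MeasurableSpace α]
    {μ : Measure α} [IsFiniteMeasure μ] {p : ℝ≥0∞} [Fact (1 ≤ p)]
    [NormedAddCommGroup E] [NormedSpace ℝ E] [CompleteSpace E]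
    [NormedAddCommGroup F] [NormedSpace ℝ F] [CompleteSpace F] (L : E →L[ℝ] F) (s : Set α) :
    Continuous fun f : Lp E p μ => ∫ x in s, L (f x) ∂μ := by
  have hcomm :
      (fun f : Lp E p μ => ∫ x in s, L (f x) ∂μ) = fun f => L (∫ x in s, f x ∂μ) :=
    funext fun f => L.integral_comp_comm ((Lp.memLp f).integrable Fact.out).restrict
  rw [hcomm]
  refine L.continuous.comp (continuous_iff_continuousAt.2 fun f => ?_)
  refine tendsto_integral_of_L1 _ (Lp.aestronglyMeasurable f).restrict
    (.of_forall fun g => ((Lp.memLp g).integrable Fact.out).restrict) ?_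
  have hexp : 0 ≤ 1 / (1 : ℝ≥0∞).toReal - 1 / p.toReal := by
    rcases eq_or_ne p ∞ with rfl | hp
    · simp
    · have : 1 ≤ p.toReal := by simpa using ENNReal.toReal_mono hp (Fact.out : 1 ≤ p)
      simpa using inv_le_one_of_one_le₀ this
  set C := μ univ ^ (1 / (1 : ℝ≥0∞).toReal - 1 / p.toReal)
  have hC : C ≠ ∞ := ENNReal.rpow_ne_top_of_nonneg hexp (measure_ne_top μ univ)
  have hbound : ∀ g : Lp E p μ, ∫⁻ x in s, ‖g x - f x‖ₑ ∂μ ≤ edist g f * C := fun g =>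
    calc ∫⁻ x in s, ‖g x - f x‖ₑ ∂μ
      _ ≤ ∫⁻ x, ‖g x - f x‖ₑ ∂μ := setLIntegral_le_lintegral _ _
      _ = eLpNorm (⇑g - ⇑f) 1 μ := eLpNorm_one_eq_lintegral_enorm.symm
      _ ≤ eLpNorm (⇑g - ⇑f) p μ * C := eLpNorm_le_eLpNorm_mul_rpow_measure_univ Fact.out
          ((Lp.aestronglyMeasurable g).sub (Lp.aestronglyMeasurable f))
      _ = edist g f * C := by rw [Lp.edist_def]
  have hlim : Tendsto (fun g : Lp E p μ => edist g f * C) (𝓝 f) (𝓝 0) := by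
    simpa using ENNReal.Tendsto.mul_const
      ((tendsto_id (x := 𝓝 f)).edist (tendsto_const_nhds (x := f))) (Or.inr hC)
  exact tendsto_of_tendsto_of_tendsto_of_le_of_le tendsto_const_nhds hlim (fun _ => zero_le) hbound

theorem MeasureTheory.unifIntegrable_of_norm_le {α ι β : Type*} [MeasurableSpace α]
    [NormedAddCommGroup β] {μ : Measure α} {p : ℝ≥0∞} (hp : 1 ≤ p) (hp' : p ≠ ∞) {f : ι → α → β}
    {g : α → ℝ} (hg : MemLp g p μ) (hfg : ∀ i x, ‖f i x‖ ≤ g x) :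
    UnifIntegrable f p μ := by
  intro ε hε
  obtain ⟨δ, hδ, hgδ⟩ := unifIntegrable_const (ι := Unit) hp hp' hg hε
  refine ⟨δ, hδ, fun i s hs hμs => (eLpNorm_mono fun x => ?_).trans (hgδ () s hs hμs)⟩
  by_cases hx : x ∈ s
  · simpa [hx] using (hfg i x).trans (le_abs_self _)
  · simp [hx]

theorem eventually_mem_Ioo_iff {β : Type*} {l : Filter β} {c d : β → ℝ} {c₀ d₀ t : ℝ}
    (hc : Tendsto c l (𝓝 c₀)) (hd : Tendsto d l (𝓝 d₀)) (htc : t ≠ c₀)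
    (htd : t ≠ d₀) : ∀ᶠ k in l, (t ∈ Ioo (c k) (d k) ↔ t ∈ Ioo c₀ d₀) := by
  by_cases ht : t ∈ Ioo c₀ d₀
  · filter_upwards [hc.eventually (gt_mem_nhds ht.1), hd.eventually (lt_mem_nhds ht.2)]
      with k hck hdk
    exact iff_of_true ⟨hck, hdk⟩ ht
  · rcases not_and_or.1 ht with h | h
    · filter_upwards [hc.eventually (lt_mem_nhds (lt_of_le_of_ne (not_lt.1 h) htc))] with k hk
      exact iff_of_false (fun h' => h'.1.not_gt hk) ht
    · filter_upwards [hd.eventually (gt_mem_nhds (lt_of_le_of_ne (not_lt.1 h) htd.symm))]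
        with k hk
      exact iff_of_false (fun h' => h'.2.not_gt hk) ht

def switchingPoints {α β : Type*} [TopologicalSpace α] (f : α → β) (s : Set α) : Set α :=
  {z ∈ s | ¬ ∀ᶠ x in 𝓝[s] z, f x = f z}

section Switching

variable {α : Type*} [TopologicalSpace α] {f : α → ℝ} {s : Set α}

theorem switchingPoints_inter_of_mem_nhds {z : α} {U : Set α} (hz : z ∈ switchingPoints f s)
    (hU : U ∈ 𝓝 z) : z ∈ switchingPoints f (s ∩ U) :=
  ⟨⟨hz.1, mem_of_mem_nhds hU⟩, by
    rw [nhdsWithin_inter_of_mem' (mem_nhdsWithin_of_mem_nhds hU)]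
    exact hz.2⟩

theorem IsPreconnected.apply_eq_of_disjoint_switchingPoints {J : Set α}
    (hJ : IsPreconnected J) (hJs : J ⊆ s) (hJZ : Disjoint J (switchingPoints f s))
    (h01 : ∀ x ∈ s, f x = 0 ∨ f x = 1)
    {x y : α} (hx : x ∈ J) (hy : y ∈ J) : f x = f y := by
  have hcont : ContinuousOn f J := fun z hz =>
    tendsto_nhds_of_eventually_eq <| nhdsWithin_mono z hJs <|
      not_not.1 fun h => Set.disjoint_left.1 hJZ hz ⟨hJs hz, h⟩
  exact hJ.constant_of_mapsTo (T := {0, 1}) DiscreteTopology.isDiscrete hcont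
    (fun z hz => h01 z (hJs hz)) hx hy

end Switching

section Variation

variable {f : ℝ → ℝ} {s : Set ℝ}

theorem one_le_eVariationOn_of_mem_switchingPoints (h01 : ∀ x ∈ s, f x = 0 ∨ f x = 1) {z : ℝ}
    (hz : z ∈ switchingPoints f s) : 1 ≤ eVariationOn f s := by
  obtain ⟨x, hxs, hxz⟩ : ∃ x ∈ s, f x ≠ f z := by
    by_contra! h
    exact hz.2 (eventually_nhdsWithin_of_forall h)
  calc 1 = edist (f x) (f z) := by
        rcases h01 x hxs with hx | hx <;> rcases h01 z hz.1 with hz' | hz' <;>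
          simp_all [edist_dist]
    _ ≤ eVariationOn f s := eVariationOn.edist_le f hxs hz.1

theorem card_le_eVariationOn_of_subset_switchingPoints (h01 : ∀ x ∈ s, f x = 0 ∨ f x = 1)
    {F : Finset ℝ} (hF : ↑F ⊆ switchingPoints f s) : (F.card : ℝ≥0∞) ≤ eVariationOn f s := by
  classical
  induction F using Finset.induction_on_max generalizing s with
  | empty => simp
  | insert z F hlt ih =>
    obtain ⟨c, hcz, hFc⟩ : ∃ c < z, ∀ y ∈ F, y < c :=
      (Eventually.and (self_mem_nhdsWithin : ∀ᶠ c in 𝓝[<] z, c < z) ((F.eventually_all).2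
        fun y hy => nhdsWithin_le_nhds (lt_mem_nhds (hlt y hy)))).exists
    -- `c` separates `z` from `F`, so each side of `c` keeps its switching points.
    have hleft := ih (s := s ∩ Iio c) (fun x hx => h01 x hx.1) fun y hy =>
      switchingPoints_inter_of_mem_nhds (hF (Finset.mem_insert_of_mem hy))
        (Iio_mem_nhds (hFc y hy))
    have hright := one_le_eVariationOn_of_mem_switchingPoints (s := s ∩ Ioi c)
      (fun x hx => h01 x hx.1)
      (switchingPoints_inter_of_mem_nhds (hF (Finset.mem_insert_self z F)) (Ioi_mem_nhds hcz))
    calc ((insert z F).card : ℝ≥0∞) = F.card + 1 := by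
          rw [Finset.card_insert_of_notMem fun h => (hlt z h).false]; push_cast; rfl
      _ ≤ eVariationOn f (s ∩ Iio c) + eVariationOn f (s ∩ Ioi c) := add_le_add hleft hright
      _ ≤ eVariationOn f (s ∩ Iio c ∪ s ∩ Ioi c) :=
          eVariationOn.add_le_union f fun x hx y hy => (hx.2.trans hy.2).le
      _ ≤ eVariationOn f s :=
          eVariationOn.mono f (union_subset inter_subset_left inter_subset_left)

theorem switchingPoints_finite_and_ncard_le (h01 : ∀ x ∈ s, f x = 0 ∨ f x = 1) {σ : ℝ}
    (hvar : eVariationOn f s ≤ ENNReal.ofReal σ) :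
    (switchingPoints f s).Finite ∧ (switchingPoints f s).ncard ≤ ⌊σ⌋₊ := by
  have hcard : ∀ F : Finset ℝ, ↑F ⊆ switchingPoints f s → F.card ≤ ⌊σ⌋₊ := fun F hF => by
    rcases Nat.eq_zero_or_pos F.card with h | h
    · simp [h]
    · exact Nat.le_floor <| (ENNReal.natCast_le_ofReal h.ne').1 <|
        (card_le_eVariationOn_of_subset_switchingPoints h01 hF).trans hvar
  have hfin : (switchingPoints f s).Finite := by
    by_contra hinf
    obtain ⟨F, hF, hFcard⟩ := Set.Infinite.exists_subset_card_eq hinf (⌊σ⌋₊ + 1)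
    have := hcard F hF
    omega
  refine ⟨hfin, ?_⟩
  simpa [Set.ncard_eq_toFinset_card _ hfin] using hcard _ hfin.coe_toFinset.subset

end Variation

theorem ae_eq_indicator_iUnion_Ioo_of_eVariationOn_le {T σ : ℝ} (hT : 0 ≤ T) {f : ℝ → ℝ}
    (h01 : ∀ t ∈ Ioo 0 T, f t = 0 ∨ f t = 1)
    (hvar : eVariationOn f (Ioo 0 T) ≤ ENNReal.ofReal σ) :
    ∃ c : Fin (⌊σ⌋₊ + 2) × Fin (⌊σ⌋₊ + 2) → ℝ × ℝ,
      (∀ l, c l ∈ Icc 0 T ×ˢ Icc 0 T) ∧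
        f =ᵐ[volume.restrict (Ioo 0 T)] (⋃ l, Ioo (c l).1 (c l).2).indicator 1 := by
  classical
  obtain ⟨hZfin, hZcard⟩ := switchingPoints_finite_and_ncard_le h01 hvar
  obtain ⟨e, he⟩ := ((hZfin.insert T).insert 0).exists_fin_range_eq (insert_nonempty _ _) <|
    (ncard_insert_le _ _).trans <| Nat.add_le_add_right ((ncard_insert_le _ _).trans
      (Nat.add_le_add_right hZcard 1)) 1
  have he_mem : ∀ l, e l ∈ Icc 0 T := by
    intro l
    rcases he ▸ mem_range_self l with h | h | h
    · rw [h]; exact left_mem_Icc.2 hT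
    · rw [h]; exact right_mem_Icc.2 hT
    · exact Ioo_subset_Icc_self h.1
  -- The points `0`, `T` and the switching points cut `(0,T)` into gaps on which `f` is
  -- constant; keep the gaps on which `f = 1` and replace the other pairs by empty intervals.
  let c : Fin (⌊σ⌋₊ + 2) × Fin (⌊σ⌋₊ + 2) → ℝ × ℝ := fun l =>
    if ∀ x ∈ Ioo (e l.1) (e l.2), f x = 1 then (e l.1, e l.2) else (e l.1, e l.1)
  refine ⟨c, fun l => ?_, ?_⟩
  · dsimp only [c]
    split_ifs <;> exact ⟨he_mem _, he_mem _⟩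
  filter_upwards [ae_restrict_mem measurableSet_Ioo,
    (finite_range e).countable.ae_notMem _] with t ht hte
  obtain ⟨a₀, ha₀⟩ : (0 : ℝ) ∈ range e := he ▸ mem_insert _ _
  obtain ⟨b₀, hb₀⟩ : T ∈ range e := he ▸ mem_insert_of_mem _ (mem_insert _ _)
  obtain ⟨a, b, htab, hdisj⟩ :=
    exists_Ioo_mem_disjoint_range ⟨a₀, ha₀ ▸ ht.1⟩ ⟨b₀, hb₀ ▸ ht.2⟩ hte
  have hconst : ∀ x ∈ Ioo (e a) (e b), f x = f t := fun x hx =>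
    isPreconnected_Ioo.apply_eq_of_disjoint_switchingPoints
      (Ioo_subset_Ioo (he_mem a).1 (he_mem b).2)
      (hdisj.mono_right (he ▸ (subset_insert _ _).trans (subset_insert _ _))) h01 hx htab
  have hmem : t ∈ ⋃ l, Ioo (c l).1 (c l).2 ↔ f t = 1 := by
    refine ⟨fun ht' => ?_, fun h1 => mem_iUnion.2 ⟨(a, b), ?_⟩⟩
    · obtain ⟨l, hl⟩ := mem_iUnion.1 ht'
      dsimp only [c] at hl
      split_ifs at hl with hl1
      · exact hl1 t hl
      · exact absurd hl (by simp)
    · have : ∀ x ∈ Ioo (e a) (e b), f x = 1 := fun x hx => (hconst x hx).trans h1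
      simpa only [c, if_pos this] using htab
  by_cases h1 : f t = 1
  · rw [indicator_of_mem (hmem.2 h1), h1, Pi.one_apply]
  · rw [indicator_of_notMem (mt hmem.1 h1)]
    exact (h01 t ht).resolve_right h1

section IntervalIndicators

variable {κ ι : Type*}

noncomputable def indicatorOfIntervals (θ : κ → ι → ℝ × ℝ) (t : ℝ) : κ → ℝ :=
  fun k => (⋃ i, Ioo (θ k i).1 (θ k i).2).indicator 1 t

theorem measurable_indicatorOfIntervals [Countable ι] (θ : κ → ι → ℝ × ℝ) :
    Measurable (indicatorOfIntervals θ) :=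
  measurable_pi_lambda _ fun _ =>
    measurable_one.indicator (MeasurableSet.iUnion fun _ => measurableSet_Ioo)

theorem norm_indicatorOfIntervals_le [Fintype κ] (θ : κ → ι → ℝ × ℝ) (t : ℝ) :
    ‖indicatorOfIntervals θ t‖ ≤ 1 :=
  (pi_norm_le_iff_of_nonneg zero_le_one).2 fun _ =>
    (norm_indicator_le_norm_self _ _).trans norm_one.le

theorem eventually_indicatorOfIntervals_eq [Finite κ] [Finite ι] {β : Type*}
    {l : Filter β} {θs : β → κ → ι → ℝ × ℝ} {θ : κ → ι → ℝ × ℝ} (hθ : Tendsto θs l (𝓝 θ))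
    {t : ℝ}
    (ht : ∀ k i, t ≠ (θ k i).1 ∧ t ≠ (θ k i).2) :
    ∀ᶠ m in l, indicatorOfIntervals (θs m) t = indicatorOfIntervals θ t := by
  have hmem : ∀ k i,
      ∀ᶠ m in l, (t ∈ Ioo (θs m k i).1 (θs m k i).2 ↔ t ∈ Ioo (θ k i).1 (θ k i).2) :=
    fun k i =>
      have hki : Tendsto (fun m => θs m k i) l (𝓝 (θ k i)) :=
        tendsto_pi_nhds.1 (tendsto_pi_nhds.1 hθ k) i
      eventually_mem_Ioo_iff hki.fst_nhds hki.snd_nhds (ht k i).1 (ht k i).2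
  filter_upwards [eventually_all.2 fun k => eventually_all.2 (hmem k)] with m hm
  funext k
  exact indicator_eq_indicator (by simp only [mem_iUnion, hm k]) rfl

variable [Fintype κ] [Finite ι] {p : ℝ≥0∞} {μ : Measure ℝ} [IsFiniteMeasure μ]

theorem memLp_indicatorOfIntervals (θ : κ → ι → ℝ × ℝ) :
    MemLp (indicatorOfIntervals θ) p μ :=
  MemLp.of_bound (measurable_indicatorOfIntervals θ).aestronglyMeasurable 1
    (.of_forall (norm_indicatorOfIntervals_le θ))

variable (p μ) in
noncomputable def intervalsToLp (θ : κ → ι → ℝ × ℝ) : Lp (κ → ℝ) p μ :=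
  (memLp_indicatorOfIntervals θ).toLp _

theorem coeFn_intervalsToLp (θ : κ → ι → ℝ × ℝ) :
    intervalsToLp p μ θ =ᵐ[μ] indicatorOfIntervals θ :=
  MemLp.coeFn_toLp _

theorem continuous_intervalsToLp [NullSingletonClass μ] [Fact (1 ≤ p)] (hp : p ≠ ∞) :
    Continuous (intervalsToLp p μ : (κ → ι → ℝ × ℝ) → Lp (κ → ℝ) p μ) := by
  rw [continuous_iff_seqContinuous]
  intro θs θ hθ
  refine (Lp.tendsto_Lp_iff_tendsto_eLpNorm'' _ (fun m => memLp_indicatorOfIntervals (θs m)) _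
    (memLp_indicatorOfIntervals θ)).2 <|
    tendsto_Lp_finite_of_tendsto_ae Fact.out hp
      (fun m => (measurable_indicatorOfIntervals _).aestronglyMeasurable)
      (memLp_indicatorOfIntervals θ)
      (unifIntegrable_of_norm_le Fact.out hp (memLp_const 1) fun _ =>
        norm_indicatorOfIntervals_le _)
      ?_
  have hends : ∀ᵐ t ∂μ, ∀ k i, t ≠ (θ k i).1 ∧ t ≠ (θ k i).2 := by
    simp only [ae_all_iff, eventually_and]
    exact fun k i => ⟨μ.ae_ne _, μ.ae_ne _⟩
  filter_upwards [hends] with t ht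
  exact tendsto_nhds_of_eventually_eq (eventually_indicatorOfIntervals_eq hθ ht)

end IntervalIndicators

theorem stmt_3
    (T : ℝ) (hT : 0 < T) (n : ℕ) (p : ℝ≥0∞) [Fact (1 ≤ p)] (hp : p ≠ ⊤)
    (σ : ℝ)
    (D : Set (Lp (Fin n → ℝ) p (volume.restrict (Ioo (0:ℝ) T))))
    (hD1 : ∀ u ∈ D, ∃ v : ℝ → Fin n → ℝ,
      ((u : ℝ → Fin n → ℝ) =ᵐ[volume.restrict (Ioo (0:ℝ) T)] v) ∧
      (∀ t ∈ Ioo (0:ℝ) T, ∀ j, v t j = 0 ∨ v t j = 1) ∧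
      (∑ j : Fin n, eVariationOn (fun s => v s j) (Ioo (0:ℝ) T)) ≤ ENNReal.ofReal σ)
    (hD2 : IsClosed D)
    (M : ℕ) (a b : Fin M → ℝ)
    (j : Fin M → Fin n) :
    IsClosed (convexHull ℝ
      ((fun u : Lp (Fin n → ℝ) p (volume.restrict (Ioo (0:ℝ) T)) =>
          fun i : Fin M => (b i - a i)⁻¹ *
            ∫ t in Ioo (a i) (b i), (u : ℝ → Fin n → ℝ) t (j i)
              ∂(volume.restrict (Ioo (0:ℝ) T))) '' D)) := by
  let K := Fin (⌊σ⌋₊ + 2) × Fin (⌊σ⌋₊ + 2)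
  have hD : D ⊆ (intervalsToLp p _ : (Fin n → K → ℝ × ℝ) → _) ''
      univ.pi fun _ => univ.pi fun _ => Icc 0 T ×ˢ Icc 0 T := by
    intro u hu
    obtain ⟨v, huv, hv01, hvar⟩ := hD1 u hu
    choose c hc hcv using fun k => ae_eq_indicator_iUnion_Ioo_of_eVariationOn_le hT.le
      (fun t ht => hv01 t ht k)
      ((Finset.single_le_sum (fun _ _ => zero_le) (Finset.mem_univ k)).trans hvar)
    refine ⟨c, fun k _ l _ => hc k l, Lp.ext ?_⟩
    filter_upwards [coeFn_intervalsToLp c, huv, ae_all_iff.2 hcv] with t h1 h2 h3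
    rw [h1, h2]
    funext k
    exact (h3 k).symm
  have hDc : IsCompact D :=
    ((isCompact_univ_pi fun _ => isCompact_univ_pi fun _ => isCompact_Icc.prod isCompact_Icc).image
      (continuous_intervalsToLp hp)).of_isClosed_subset hD2 hD
  refine (hDc.image ?_).convexHull.isClosed
  exact continuous_pi fun i => continuous_const.mul
    (Lp.continuous_setIntegral_comp_clm (μ := volume.restrict (Ioo 0 T)) (p := p)
      (ContinuousLinearMap.proj (R := ℝ) (φ := fun _ : Fin n => ℝ) (j i)) (Ioo (a i) (b i)))
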